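/- arXiv:2402.04799 — 2 statements merged into one kernel-verified Lean document; each statement's English description precedes it below -/
import Mathlib

section
/- Let V ∈ ℝ^{d×m} and let S ⊆ [m] be such that the column submatrix V_S has full column rank, with |S| < m. Let P_S := V_S (V_S^T V_S)^{-1} V_S^T be the orthogonal projection onto the column span of V_S. Then max_{j∈[m]} det(V_{S∪{j}}^T V_{S∪{j}}) / det(V_S^T V_S) = max_{j∈[m]} ‖(I_d − P_S) v_j‖_2² ≥ tr[(I_d − P_S) V V^T] / (m − |S|), where v_j is the j-th column of V. -/
open Matrix BigOperators

/-- The submatrix of `V` consisting of the columns indexed by `S`. -/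
def cols {d m : ℕ} (V : Matrix (Fin d) (Fin m) ℝ) (S : Finset (Fin m)) :
    Matrix (Fin d) {j // j ∈ S} ℝ :=
  Matrix.of fun i j => V i j

/-- The matrix obtained from `V_S` by appending the column `v_j` (the matrix
`V_{S∪{j}}` of the statement). -/
def appCol {d m : ℕ} (V : Matrix (Fin d) (Fin m) ℝ) (S : Finset (Fin m)) (j : Fin m) :
    Matrix (Fin d) ({k // k ∈ S} ⊕ Unit) ℝ :=
  Matrix.of fun i k => Sum.elim (fun s : {k // k ∈ S} => V i s) (fun _ => V i j) k

/-- The orthogonal projection onto the column span of `V_S`. -/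
noncomputable def projCols {d m : ℕ} (V : Matrix (Fin d) (Fin m) ℝ) (S : Finset (Fin m)) :
    Matrix (Fin d) (Fin d) ℝ :=
  cols V S * ((cols V S)ᵀ * cols V S)⁻¹ * (cols V S)ᵀ

/-!
By the Schur complement formula, appending a column `v` to `A = V_S` multiplies the Gram
determinant by `vᵀ(I - P)v`, where `P = A(AᵀA)⁻¹Aᵀ`; since `I - P` is a symmetric idempotent
this is `‖(I - P)v‖²`. Summing these residuals over all columns gives `tr[(I - P)VVᵀ]`, and the
columns in `S` contribute nothing because `(I - P)A = 0`. Hence the sum has at most `m - |S|`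
nonzero terms, so its largest term is at least the average.
-/

namespace Matrix

variable {R : Type*} {p n : Type*} [Fintype p] [Fintype n] [DecidableEq n]

theorem isUnit_of_rank_eq_card [Field R] {M : Matrix n n R} (h : M.rank = Fintype.card n) :
    IsUnit M := by
  rw [← mulVec_surjective_iff_isUnit, ← coe_mulVecLin, ← LinearMap.range_eq_top]
  exact Submodule.eq_top_of_finrank_eq (by rw [← rank, h, Module.finrank_fintype_fun_eq_card])

theorem isUnit_det_transpose_mul_self [Field R] [LinearOrder R] [IsStrictOrderedRing R]
    {A : Matrix p n R} (h : A.rank = Fintype.card n) : IsUnit (Aᵀ * A).det :=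
  (isUnit_iff_isUnit_det _).mp <| isUnit_of_rank_eq_card <| by rw [rank_transpose_mul_self, h]

section GramProjection

variable [CommRing R] (A : Matrix p n R)

theorem transpose_one_sub_mul_inv_gram_mul_transpose [DecidableEq p] :
    (1 - A * (Aᵀ * A)⁻¹ * Aᵀ)ᵀ = 1 - A * (Aᵀ * A)⁻¹ * Aᵀ := by
  simp only [transpose_sub, transpose_one, transpose_mul, transpose_transpose,
    transpose_nonsing_inv, Matrix.mul_assoc]

variable {A}

theorem mul_inv_gram_mul_transpose_mul_self (hA : IsUnit (Aᵀ * A).det) :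
    A * (Aᵀ * A)⁻¹ * Aᵀ * A = A := by
  rw [Matrix.mul_assoc _ Aᵀ, Matrix.mul_assoc, nonsing_inv_mul _ hA, Matrix.mul_one]

theorem isIdempotentElem_mul_inv_gram_mul_transpose (hA : IsUnit (Aᵀ * A).det) :
    IsIdempotentElem (A * (Aᵀ * A)⁻¹ * Aᵀ) := by
  rw [IsIdempotentElem]
  simp only [← Matrix.mul_assoc]
  rw [mul_inv_gram_mul_transpose_mul_self hA]

theorem one_sub_mul_inv_gram_mul_transpose_mul_self [DecidableEq p] (hA : IsUnit (Aᵀ * A).det) :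
    (1 - A * (Aᵀ * A)⁻¹ * Aᵀ) * A = 0 := by
  rw [Matrix.sub_mul, Matrix.one_mul, mul_inv_gram_mul_transpose_mul_self hA, sub_self]

theorem det_gram_fromCols_replicateCol [DecidableEq p] (hA : IsUnit (Aᵀ * A).det) (w : p → R) :
    ((fromCols A (replicateCol Unit w))ᵀ * fromCols A (replicateCol Unit w)).det
      = (Aᵀ * A).det * (w ⬝ᵥ ((1 - A * (Aᵀ * A)⁻¹ * Aᵀ) *ᵥ w)) := by
  let := (Aᵀ * A).invertibleOfIsUnitDet hA
  rw [transpose_fromCols, fromRows_mul_fromCols, det_fromBlocks₁₁, invOf_eq_nonsing_inv]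
  congr 1
  rw [det_unique, ← replicateRow_mul_replicateCol_apply (ι := Unit) _ _ default default,
    replicateCol_mulVec, transpose_replicateCol]
  simp only [Matrix.sub_mul, Matrix.mul_sub, Matrix.one_mul, Matrix.mul_assoc]

end GramProjection

theorem sum_sq_mulVec_eq_dotProduct_mulVec [CommRing R] {Q : Matrix p p R}
    (hsymm : Qᵀ = Q) (hidem : IsIdempotentElem Q) (w : p → R) :
    ∑ i, (Q *ᵥ w) i ^ 2 = w ⬝ᵥ (Q *ᵥ w) := by
  calc ∑ i, (Q *ᵥ w) i ^ 2 = (Q *ᵥ w) ⬝ᵥ (Q *ᵥ w) := by simp only [dotProduct, sq]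
    _ = w ⬝ᵥ (Q *ᵥ w) := by
      rw [dotProduct_mulVec, ← hsymm, vecMul_transpose, hsymm, mulVec_mulVec, hidem.eq,
        dotProduct_comm]

theorem trace_mul_mul_transpose [CommSemiring R] {m : Type*} [Fintype m] (Q : Matrix p p R)
    (V : Matrix p m R) :
    trace (Q * (V * Vᵀ)) = ∑ j, (fun i => V i j) ⬝ᵥ (Q *ᵥ fun i => V i j) := by
  rw [← Matrix.mul_assoc, trace_mul_comm, trace]
  simp [diag, Matrix.mul_apply, mulVec, dotProduct, Finset.mul_sum]

end Matrix

theorem Finset.sum_le_card_compl_mul_iSup {ι : Type*} [Fintype ι] [DecidableEq ι] (f : ι → ℝ)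
    (S : Finset ι) (hS : ∀ j ∈ S, f j = 0) :
    ∑ j, f j ≤ ((Fintype.card ι : ℝ) - S.card) * ⨆ j, f j := by
  rw [← Finset.sum_compl_add_sum S f, Finset.sum_eq_zero hS, add_zero,
    ← Nat.cast_sub S.card_le_univ, ← Finset.card_compl, ← nsmul_eq_mul]
  exact Finset.sum_le_card_nsmul _ _ _ fun j _ => le_ciSup (Set.finite_range f).bddAbove j

section ColumnSubmatrix

variable {d m : ℕ} (V : Matrix (Fin d) (Fin m) ℝ) (S : Finset (Fin m))

theorem appCol_eq_fromCols (j : Fin m) :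
    appCol V S j = fromCols (cols V S) (replicateCol Unit fun i => V i j) := by
  ext i (k | k) <;> rfl

theorem isUnit_det_gram_cols (hrank : (cols V S).rank = S.card) :
    IsUnit ((cols V S)ᵀ * cols V S).det :=
  isUnit_det_transpose_mul_self (by rw [hrank, Fintype.card_coe])

theorem one_sub_projCols_mulVec_of_mem (hrank : (cols V S).rank = S.card) {j : Fin m}
    (hj : j ∈ S) : (1 - projCols V S) *ᵥ (fun i => V i j) = 0 := by
  have hcol : (fun i => V i j) = cols V S *ᵥ Pi.single ⟨j, hj⟩ 1 := by
    rw [mulVec_single_one]; rfl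
  rw [hcol, mulVec_mulVec, projCols,
    one_sub_mul_inv_gram_mul_transpose_mul_self (isUnit_det_gram_cols V S hrank), zero_mulVec]

end ColumnSubmatrix

/-- Greedy determinant lower bound: if `V_S` has full column rank, then
`max_j det(V_{S∪{j}}ᵀV_{S∪{j}})/det(V_SᵀV_S) = max_j ‖(I−P_S)v_j‖² ≥
tr[(I−P_S)VVᵀ]/(m−|S|)`. -/
theorem det_avg_lower_bound {d m : ℕ} (V : Matrix (Fin d) (Fin m) ℝ)
    (S : Finset (Fin m)) (hrank : (cols V S).rank = S.card) (hSm : S.card < m) :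
    (⨆ j : Fin m, ((appCol V S j)ᵀ * appCol V S j).det / ((cols V S)ᵀ * cols V S).det)
      = (⨆ j : Fin m, ∑ i, (((1 - projCols V S) *ᵥ fun i => V i j) i) ^ 2) ∧
    (⨆ j : Fin m, ∑ i, (((1 - projCols V S) *ᵥ fun i => V i j) i) ^ 2)
      ≥ Matrix.trace ((1 - projCols V S) * (V * Vᵀ)) / ((m : ℝ) - S.card) := by
  have hG := isUnit_det_gram_cols V S hrank
  have hres (j : Fin m) : ∑ i, (((1 - projCols V S) *ᵥ fun i => V i j) i) ^ 2
      = (fun i => V i j) ⬝ᵥ ((1 - projCols V S) *ᵥ fun i => V i j) :=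
    sum_sq_mulVec_eq_dotProduct_mulVec
      (transpose_one_sub_mul_inv_gram_mul_transpose _)
      (isIdempotentElem_mul_inv_gram_mul_transpose hG).one_sub _
  refine ⟨iSup_congr fun j => ?_, ?_⟩
  · rw [appCol_eq_fromCols, det_gram_fromCols_replicateCol hG, hres, projCols,
      mul_div_cancel_left₀ _ hG.ne_zero]
  · have hcard : (0 : ℝ) < m - S.card := sub_pos.2 (by exact_mod_cast hSm)
    rw [ge_iff_le, div_le_iff₀ hcard, trace_mul_mul_transpose, mul_comm]
    simp only [← hres]
    simpa only [Fintype.card_fin] using Finset.sum_le_card_compl_mul_iSup _ S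
      fun j hj => by rw [one_sub_projCols_mulVec_of_mem V S hrank hj]; simp
end

section
/- Let A ∈ ℝ^{m×n} be entrywise nonnegative with every row containing a positive entry, let r ∈ ℝ^m be positive, c ∈ ℝ^n, and y ∈ ℝ^n positive. Define the induced column sums c^{A,r}_j(y) := Σ_{i∈[m]} r_i · A_{ij} y_j / (Σ_{k∈[n]} A_{ik} y_k). Let T ⊆ [n] have margin γ ≥ 0 (witnessed by threshold ν): max_{j∈T}(c^{A,r}_j(y) − c_j) ≤ ν − γ and ν + γ ≤ min_{j∉T}(c^{A,r}_j(y) − c_j). Let h(α) := Σ_{j∈T} c^{A,r}_j(y ∘ (1_{T^c} + α·1_T)). Then for any α ≥ 1 with 0 ≤ h(α) − h(1) ≤ γ, the scaling y' := y ∘ (1_{T^c} + α·1_T) satisfies ‖c^{A,r}(y) − c‖_2² − ‖c^{A,r}(y') − c‖_2² ≥ 2γ·(h(α) − h(1)). -/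
open BigOperators

/-- The induced column sums of the matrix-scaling problem:
`c^{A,r}_j(y) = Σ_i r_i · A_{ij} y_j / (Σ_k A_{ik} y_k)`. -/
noncomputable def colsum {m n : ℕ} (A : Matrix (Fin m) (Fin n) ℝ) (r : Fin m → ℝ)
    (y : Fin n → ℝ) (j : Fin n) : ℝ :=
  ∑ i, r i * (A i j * y j / ∑ k, A i k * y k)

/-- `scale y T α = y ∘ (1_{Tᶜ} + α·1_T)`. -/
def scale {n : ℕ} (y : Fin n → ℝ) (T : Finset (Fin n)) (α : ℝ) : Fin n → ℝ :=
  fun j => if j ∈ T then α * y j else y j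

/-- The matrix-scaling proxy function `h(α) = Σ_{j∈T} c^{A,r}_j(y ∘ (1_{Tᶜ} + α·1_T))`. -/
noncomputable def proxym {m n : ℕ} (A : Matrix (Fin m) (Fin n) ℝ) (r : Fin m → ℝ)
    (y : Fin n → ℝ) (T : Finset (Fin n)) (α : ℝ) : ℝ :=
  ∑ j ∈ T, colsum A r (scale y T α) j

/-
The new column sums `c' = c^{A,r}(y')` preserve total mass, rise on `T` and fall off `T`
(on `T` because `colsum` is invariant under a common rescaling, so scaling `T` up by `α` is the
same as scaling `Tᶜ` down by `α⁻¹`). Writing `u = c^{A,r}(y) - c` and `e = c' - c^{A,r}(y)`,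
with `δ = Σ_{j∈T} e_j = h(α) - h(1) = -Σ_{j∉T} e_j`, the margin gives `⟪u, e⟫ ≤ -2γδ` and the
sign pattern gives `‖e‖² ≤ 2δ² ≤ 2γδ`, so `‖u‖² - ‖u + e‖² = -2⟪u, e⟫ - ‖e‖² ≥ 2γδ`.
-/

section MassPreservingShift

open Finset

variable {ι : Type*} [Fintype ι] [DecidableEq ι]

theorem sum_compl_eq_neg_of_sum_eq_zero {e : ι → ℝ} (he : ∑ j, e j = 0) (T : Finset ι) :
    ∑ j ∈ Tᶜ, e j = -∑ j ∈ T, e j := by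
  linarith [sum_add_sum_compl T e]

theorem sum_sq_le_two_mul_sq_of_sum_eq_zero {e : ι → ℝ} (he : ∑ j, e j = 0) {T : Finset ι}
    (hmem : ∀ j ∈ T, 0 ≤ e j) (hnotMem : ∀ j ∉ T, e j ≤ 0) :
    ∑ j, e j ^ 2 ≤ 2 * (∑ j ∈ T, e j) ^ 2 := by
  have hT := sum_sq_le_sq_sum_of_nonneg hmem
  have hTc := sum_sq_le_sq_sum_of_nonneg (s := Tᶜ) (f := fun j => -e j)
    fun j hj => neg_nonneg.mpr (hnotMem j (mem_compl.mp hj))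
  simp only [neg_sq, sum_neg_distrib, sum_compl_eq_neg_of_sum_eq_zero he] at hTc
  rw [← sum_add_sum_compl T]
  linarith

theorem le_sum_sq_sub_sum_sq_of_margin {u v : ι → ℝ} {T : Finset ι} {γ ν : ℝ}
    (hsum : ∑ j, v j = ∑ j, u j)
    (hmem : ∀ j ∈ T, u j ≤ v j) (hnotMem : ∀ j ∉ T, v j ≤ u j)
    (hmargin₁ : ∀ j ∈ T, u j ≤ ν - γ) (hmargin₂ : ∀ j ∉ T, ν + γ ≤ u j)
    (hδ : ∑ j ∈ T, (v j - u j) ≤ γ) :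
    2 * γ * ∑ j ∈ T, (v j - u j) ≤ ∑ j, u j ^ 2 - ∑ j, v j ^ 2 := by
  set e : ι → ℝ := fun j => v j - u j
  set δ := ∑ j ∈ T, e j
  have he : ∑ j, e j = 0 := by simp only [e, sum_sub_distrib, hsum, sub_self]
  have he_mem : ∀ j ∈ T, 0 ≤ e j := fun j hj => sub_nonneg.mpr (hmem j hj)
  have he_notMem : ∀ j ∉ T, e j ≤ 0 := fun j hj => sub_nonpos.mpr (hnotMem j hj)
  have hcross : ∑ j, u j * e j ≤ -2 * γ * δ := by
    have hT : ∑ j ∈ T, u j * e j ≤ ∑ j ∈ T, (ν - γ) * e j :=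
      sum_le_sum fun j hj => mul_le_mul_of_nonneg_right (hmargin₁ j hj) (he_mem j hj)
    have hTc : ∑ j ∈ Tᶜ, u j * e j ≤ ∑ j ∈ Tᶜ, (ν + γ) * e j :=
      sum_le_sum fun j hj =>
        mul_le_mul_of_nonpos_right (hmargin₂ j (mem_compl.mp hj)) (he_notMem j (mem_compl.mp hj))
    rw [← mul_sum, sum_compl_eq_neg_of_sum_eq_zero he] at hTc
    rw [← mul_sum] at hT
    rw [← sum_add_sum_compl T]
    linarith
  have hexpand : ∑ j, u j ^ 2 - ∑ j, v j ^ 2 = -2 * ∑ j, u j * e j - ∑ j, e j ^ 2 := by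
    rw [mul_sum, ← sum_sub_distrib, ← sum_sub_distrib]
    exact sum_congr rfl fun j _ => by ring
  have hδ_nonneg : 0 ≤ δ := sum_nonneg he_mem
  rw [hexpand]
  nlinarith [sum_sq_le_two_mul_sq_of_sum_eq_zero he he_mem he_notMem,
    mul_le_mul_of_nonneg_left hδ hδ_nonneg]

end MassPreservingShift

section MatrixScaling

variable {m n : ℕ} (A : Matrix (Fin m) (Fin n) ℝ) (r : Fin m → ℝ)

theorem sum_mul_pos_of_row {y : Fin n → ℝ} (hA : ∀ i j, 0 ≤ A i j)
    (hrow : ∀ i, ∃ j, 0 < A i j) (hy : ∀ j, 0 < y j) (i : Fin m) :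
    0 < ∑ k, A i k * y k := by
  obtain ⟨j, hj⟩ := hrow i
  exact Finset.sum_pos' (fun k _ => mul_nonneg (hA i k) (hy k).le)
    ⟨j, Finset.mem_univ j, mul_pos hj (hy j)⟩

theorem sum_colsum {y : Fin n → ℝ} (hA : ∀ i j, 0 ≤ A i j) (hrow : ∀ i, ∃ j, 0 < A i j)
    (hy : ∀ j, 0 < y j) : ∑ j, colsum A r y j = ∑ i, r i := by
  unfold colsum
  rw [Finset.sum_comm]
  refine Finset.sum_congr rfl fun i _ => ?_
  rw [← Finset.mul_sum, ← Finset.sum_div, div_self (sum_mul_pos_of_row A hA hrow hy i).ne',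
    mul_one]

theorem colsum_smul (y : Fin n → ℝ) {α : ℝ} (hα : α ≠ 0) :
    colsum A r (α • y) = colsum A r y := by
  funext j
  simp only [colsum, Pi.smul_apply, smul_eq_mul, mul_left_comm _ α, ← Finset.mul_sum,
    mul_div_mul_left _ _ hα]

theorem colsum_le_of_le_of_eq {y y' : Fin n → ℝ} (hA : ∀ i j, 0 ≤ A i j)
    (hrow : ∀ i, ∃ j, 0 < A i j) (hr : ∀ i, 0 ≤ r i) (hy : ∀ j, 0 < y j) (hle : y ≤ y')
    {j : Fin n} (hj : y' j = y j) : colsum A r y' j ≤ colsum A r y j := by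
  refine Finset.sum_le_sum fun i _ => mul_le_mul_of_nonneg_left ?_ (hr i)
  rw [hj]
  have hnum : 0 ≤ A i j * y j := mul_nonneg (hA i j) (hy j).le
  gcongr with k
  exacts [sum_mul_pos_of_row A hA hrow hy i, hA i k, hle k]

end MatrixScaling

section Scale

variable {n : ℕ}

@[simp]
theorem scale_one (y : Fin n → ℝ) (T : Finset (Fin n)) : scale y T 1 = y := by
  funext j
  simp [scale]

theorem scale_eq_smul_scale_compl (y : Fin n → ℝ) (T : Finset (Fin n)) {α : ℝ} (hα : α ≠ 0) :
    scale y T α = α • scale y Tᶜ α⁻¹ := by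
  funext j
  by_cases hj : j ∈ T <;> simp [scale, hj, hα]

theorem scale_pos (T : Finset (Fin n)) {y : Fin n → ℝ} (hy : ∀ j, 0 < y j) {α : ℝ}
    (hα : 0 < α) (j : Fin n) : 0 < scale y T α j := by
  unfold scale
  split_ifs
  exacts [mul_pos hα (hy j), hy j]

theorem le_scale (T : Finset (Fin n)) {y : Fin n → ℝ} (hy : ∀ j, 0 ≤ y j) {α : ℝ} (hα : 1 ≤ α) :
    y ≤ scale y T α := by
  intro j
  unfold scale
  split_ifs
  exacts [le_mul_of_one_le_left (hy j) hα, le_rfl]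

theorem scale_le (T : Finset (Fin n)) {y : Fin n → ℝ} (hy : ∀ j, 0 ≤ y j) {α : ℝ} (hα : α ≤ 1) :
    scale y T α ≤ y := by
  intro j
  unfold scale
  split_ifs
  exacts [mul_le_of_le_one_left (hy j) hα, le_rfl]

end Scale

section Progress

variable {m n : ℕ} {A : Matrix (Fin m) (Fin n) ℝ} {r : Fin m → ℝ} {y : Fin n → ℝ}
  {T : Finset (Fin n)} {α : ℝ}

theorem colsum_scale_le_of_notMem (hA : ∀ i j, 0 ≤ A i j) (hrow : ∀ i, ∃ j, 0 < A i j)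
    (hr : ∀ i, 0 ≤ r i) (hy : ∀ j, 0 < y j) (hα : 1 ≤ α) {j : Fin n} (hj : j ∉ T) :
    colsum A r (scale y T α) j ≤ colsum A r y j :=
  colsum_le_of_le_of_eq A r hA hrow hr hy (le_scale T (fun k => (hy k).le) hα)
    (by simp [scale, hj])

theorem colsum_le_colsum_scale_of_mem (hA : ∀ i j, 0 ≤ A i j) (hrow : ∀ i, ∃ j, 0 < A i j)
    (hr : ∀ i, 0 ≤ r i) (hy : ∀ j, 0 < y j) (hα : 1 ≤ α) {j : Fin n} (hj : j ∈ T) :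
    colsum A r y j ≤ colsum A r (scale y T α) j := by
  have hα₀ : 0 < α := zero_lt_one.trans_le hα
  rw [scale_eq_smul_scale_compl y T hα₀.ne', colsum_smul A r _ hα₀.ne']
  exact colsum_le_of_le_of_eq A r hA hrow hr (scale_pos Tᶜ hy (inv_pos.mpr hα₀))
    (scale_le Tᶜ (fun k => (hy k).le) (inv_le_one_of_one_le₀ hα))
    (by simp [scale, hj])

theorem proxym_sub_proxym_one :
    proxym A r y T α - proxym A r y T 1 =
      ∑ j ∈ T, (colsum A r (scale y T α) j - colsum A r y j) := by
  simp only [proxym, scale_one, Finset.sum_sub_distrib]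

end Progress

theorem matrix_progress_lemma_general {m n : ℕ} (A : Matrix (Fin m) (Fin n) ℝ)
    (hA : ∀ i j, 0 ≤ A i j) (hrow : ∀ i, ∃ j, 0 < A i j)
    (r : Fin m → ℝ) (hr : ∀ i, 0 < r i) (c : Fin n → ℝ)
    (y : Fin n → ℝ) (hy : ∀ j, 0 < y j)
    (T : Finset (Fin n)) (γ ν : ℝ)
    (hmargin₁ : ∀ j ∈ T, colsum A r y j - c j ≤ ν - γ)
    (hmargin₂ : ∀ j ∉ T, ν + γ ≤ colsum A r y j - c j)
    (α : ℝ) (hα : 1 ≤ α)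
    (h1 : proxym A r y T α - proxym A r y T 1 ≤ γ) :
    (∑ j, (colsum A r y j - c j) ^ 2)
        - (∑ j, (colsum A r (scale y T α) j - c j) ^ 2)
      ≥ 2 * γ * (proxym A r y T α - proxym A r y T 1) := by
  have hr₀ : ∀ i, 0 ≤ r i := fun i => (hr i).le
  have key := le_sum_sq_sub_sum_sq_of_margin (u := fun j => colsum A r y j - c j)
    (v := fun j => colsum A r (scale y T α) j - c j)
    (by simp only [Finset.sum_sub_distrib, sum_colsum A r hA hrow hy,
      sum_colsum A r hA hrow (scale_pos T hy (zero_lt_one.trans_le hα))])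
    (fun j hj => sub_le_sub_right (colsum_le_colsum_scale_of_mem hA hrow hr₀ hy hα hj) _)
    (fun j hj => sub_le_sub_right (colsum_scale_le_of_notMem hA hrow hr₀ hy hα hj) _)
    hmargin₁ hmargin₂
  simp only [sub_sub_sub_cancel_right, ← proxym_sub_proxym_one] at key
  exact key h1

/-- Matrix-scaling progress lemma: if `T` has margin `γ` (witnessed by `ν`) and
`α ≥ 1` satisfies `0 ≤ h(α) − h(1) ≤ γ`, then scaling up `T` by `α` decreases the
squared column-sum error by at least `2γ(h(α) − h(1))`. -/
theorem matrix_progress_lemma {m n : ℕ} (A : Matrix (Fin m) (Fin n) ℝ)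
    (hA : ∀ i j, 0 ≤ A i j) (hrow : ∀ i, ∃ j, 0 < A i j)
    (r : Fin m → ℝ) (hr : ∀ i, 0 < r i) (c : Fin n → ℝ)
    (y : Fin n → ℝ) (hy : ∀ j, 0 < y j)
    (T : Finset (Fin n)) (γ ν : ℝ) (hγ : 0 ≤ γ)
    (hmargin₁ : ∀ j ∈ T, colsum A r y j - c j ≤ ν - γ)
    (hmargin₂ : ∀ j ∉ T, ν + γ ≤ colsum A r y j - c j)
    (α : ℝ) (hα : 1 ≤ α)
    (h0 : 0 ≤ proxym A r y T α - proxym A r y T 1)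
    (h1 : proxym A r y T α - proxym A r y T 1 ≤ γ) :
    (∑ j, (colsum A r y j - c j) ^ 2)
        - (∑ j, (colsum A r (scale y T α) j - c j) ^ 2)
      ≥ 2 * γ * (proxym A r y T α - proxym A r y T 1) :=
  matrix_progress_lemma_general A hA hrow r hr c y hy T γ ν hmargin₁ hmargin₂ α hα h1
end
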